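/- (Normal form for pure virtual braids.) For every n ≥ 2 and every b ∈ VP_n, there exist elements w_2, w_3, …, w_n with w_j ∈ W_j for each j such that b = w_2 w_3 ⋯ w_n, where W_j ⊆ VP_n denotes the image under the natural inclusion ι_{j,n} : VP_j → VP_n (determined by λ_{ab} ↦ λ_{ab}) of the subgroup V_j^*, the normal closure in VP_j of {λ_{ij}, λ_{ji} : 1 ≤ i ≤ j−1}. -/

import Mathlib

/-- Generators of the pure virtual braid group `VP n`: ordered pairs of distinct
indices, the pair `(i, j)` corresponding to the generator `λ_{ij}`. -/
def Gen (n : ℕ) : Type := {p : Fin n × Fin n // p.1 ≠ p.2}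

instance (n : ℕ) : DecidableEq (Gen n) :=
  fun a b => decidable_of_iff (a.1 = b.1) Subtype.ext_iff.symm

/-- The generator `λ_{ij}` inside the free group on the generators. -/
def lamF {n : ℕ} {i j : Fin n} (h : i ≠ j) : FreeGroup (Gen n) :=
  FreeGroup.of ⟨(i, j), h⟩

/-- `s(ab) = 1` if `a < b`, and `-1` otherwise. -/
def sgn {n : ℕ} (a b : Fin n) : ℤ := if a < b then 1 else -1

/-- The defining relators of the pure virtual braid group `VP n`:
(1) `λ_{jk} λ_{im} = λ_{im} λ_{jk}` for pairwise distinct `i, j, k, m`;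
(2) `λ_{ki}^{s(ki)} λ_{kj}^{s(kj)} λ_{ij}^{s(ij)} = λ_{ij}^{s(ij)} λ_{kj}^{s(kj)} λ_{ki}^{s(ki)}`
for pairwise distinct `i, j, k`. -/
def vpRels (n : ℕ) : Set (FreeGroup (Gen n)) :=
  {r | ∃ (i j k m : Fin n) (hjk : j ≠ k) (him : i ≠ m),
      i ≠ j ∧ i ≠ k ∧ j ≠ m ∧ k ≠ m ∧
      r = lamF hjk * lamF him * (lamF hjk)⁻¹ * (lamF him)⁻¹} ∪
  {r | ∃ (i j k : Fin n) (hki : k ≠ i) (hkj : k ≠ j) (hij : i ≠ j),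
      r = (lamF hki ^ sgn k i * lamF hkj ^ sgn k j * lamF hij ^ sgn i j) *
          (lamF hij ^ sgn i j * lamF hkj ^ sgn k j * lamF hki ^ sgn k i)⁻¹}

/-- The pure virtual braid group on `n` strands, as a presented group. -/
abbrev VP (n : ℕ) : Type := PresentedGroup (vpRels n)

/-- The generator `λ_{ij}` of `VP n`. -/
def lam {n : ℕ} {i j : Fin n} (h : i ≠ j) : VP n := PresentedGroup.of ⟨(i, j), h⟩

/-- The last index `j` (in one-based numbering) of `Fin j`. -/
def lastIdx (j : ℕ) (hj : 0 < j) : Fin j := ⟨j - 1, by omega⟩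

/-- The set `{λ_{ij}, λ_{ji} : 1 ≤ i ≤ j−1}` in `VP j`, whose normal closure is `V_j^*`. -/
def VstarSet (j : ℕ) (hj : 0 < j) : Set (VP j) :=
  {x | ∃ (i : Fin j) (hi : i ≠ lastIdx j hj), x = lam hi ∨ x = lam hi.symm}

/-!
Every generator `λ_{ab}` of `VP (n+1)` either has both indices among the first `n`, and so lies
in the image of `VP n`, or involves the last strand, and so lies in `V*_{n+1}`. Since `V*_{n+1}`
is normal, this gives `VP (n+1) = ι(VP n) · V*_{n+1}`, and induction on `n`, starting from
`VP 2 = V*_2`, yields the normal form.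
-/

namespace VP

def Gen.castLE {m n : ℕ} (h : m ≤ n) (g : Gen m) : Gen n :=
  ⟨(Fin.castLE h g.1.1, Fin.castLE h g.1.2), (Fin.castLE_injective h).ne g.2⟩

theorem lamF_map_castLE {m n : ℕ} (h : m ≤ n) {i j : Fin m} (hij : i ≠ j) :
    FreeGroup.map (Gen.castLE h) (lamF hij) = lamF ((Fin.castLE_injective h).ne hij) :=
  rfl

theorem sgn_castLE {m n : ℕ} (h : m ≤ n) (a b : Fin m) :
    sgn (Fin.castLE h a) (Fin.castLE h b) = sgn a b := by
  simp only [sgn, Fin.lt_def, Fin.val_castLE]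

theorem map_castLE_mem_vpRels {m n : ℕ} (h : m ≤ n) {r : FreeGroup (Gen m)}
    (hr : r ∈ vpRels m) : FreeGroup.map (Gen.castLE h) r ∈ vpRels n := by
  have hinj := Fin.castLE_injective h
  rcases hr with ⟨i, j, k, l, hjk, hil, hij, hik, hjl, hkl, rfl⟩ | ⟨i, j, k, hki, hkj, hij, rfl⟩
  · refine Or.inl ⟨_, _, _, _, hinj.ne hjk, hinj.ne hil, hinj.ne hij, hinj.ne hik, hinj.ne hjl,
      hinj.ne hkl, ?_⟩
    simp only [map_mul, map_inv, lamF_map_castLE]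
  · refine Or.inr ⟨_, _, _, hinj.ne hki, hinj.ne hkj, hinj.ne hij, ?_⟩
    simp only [map_mul, map_inv, map_zpow, lamF_map_castLE, sgn_castLE]

def inclusion {m n : ℕ} (h : m ≤ n) : VP m →* VP n :=
  PresentedGroup.toGroup (f := fun g => PresentedGroup.of (Gen.castLE h g)) fun r hr => by
    have hlift : FreeGroup.lift (fun g => (PresentedGroup.of (Gen.castLE h g) : VP n)) =
        (PresentedGroup.mk (vpRels n)).comp (FreeGroup.map (Gen.castLE h)) := by
      ext g
      simp [PresentedGroup.of]
    rw [hlift]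
    exact PresentedGroup.one_of_mem (map_castLE_mem_vpRels h hr)

theorem inclusion_of {m n : ℕ} (h : m ≤ n) (g : Gen m) :
    inclusion h (PresentedGroup.of g) = PresentedGroup.of (Gen.castLE h g) :=
  PresentedGroup.toGroup.of _

theorem inclusion_lam {m n : ℕ} (h : m ≤ n) {i j : Fin m} (hij : i ≠ j)
    (hij' : Fin.castLE h i ≠ Fin.castLE h j) :
    inclusion h (lam hij) = lam hij' :=
  inclusion_of h _

theorem inclusion_comp {l m n : ℕ} (h₁ : l ≤ m) (h₂ : m ≤ n) :
    (inclusion h₂).comp (inclusion h₁) = inclusion (h₁.trans h₂) :=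
  PresentedGroup.ext fun g => by simp only [MonoidHom.comp_apply, inclusion_of]; rfl

theorem inclusion_refl {n : ℕ} (h : n ≤ n) : inclusion h = MonoidHom.id (VP n) :=
  PresentedGroup.ext fun g => by simp only [inclusion_of, MonoidHom.id_apply]; rfl

/-- The subgroup `W_j` of `VP n`: the image of `V*_j` under `ι_{j,n}`. -/
def W (n j : ℕ) (hj : 0 < j) (h : j ≤ n) : Subgroup (VP n) :=
  (Subgroup.normalClosure (VstarSet j hj)).map (inclusion h)

theorem map_inclusion_W {m n j : ℕ} (hj : 0 < j) (h : j ≤ m) (h' : m ≤ n) :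
    (W m j hj h).map (inclusion h') = W n j hj (h.trans h') := by
  rw [W, Subgroup.map_map, inclusion_comp]
  rfl

theorem W_self {n : ℕ} (hn : 0 < n) :
    W n n hn le_rfl = Subgroup.normalClosure (VstarSet n hn) := by
  rw [W, inclusion_refl, Subgroup.map_id]

theorem normalClosure_VstarSet_two : Subgroup.normalClosure (VstarSet 2 two_pos) = ⊤ := by
  rw [eq_top_iff, ← PresentedGroup.closure_range_of, Subgroup.closure_le]
  rintro _ ⟨⟨⟨i, j⟩, hij⟩, rfl⟩
  apply Subgroup.subset_normalClosure
  fin_cases i <;> fin_cases j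
  exacts [absurd rfl hij, ⟨0, by decide, Or.inl rfl⟩, ⟨0, by decide, Or.inr rfl⟩, absurd rfl hij]

theorem of_mem_range_inclusion_or_mem_VstarSet {n : ℕ} (g : Gen (n + 1)) :
    PresentedGroup.of g ∈ (inclusion n.le_succ).range ∨
      PresentedGroup.of g ∈ VstarSet (n + 1) n.succ_pos := by
  obtain ⟨⟨i, j⟩, hij⟩ := g
  cases i using Fin.lastCases with
  | last =>
    cases j using Fin.lastCases with
    | last => exact absurd rfl hij
    | cast j => exact .inr ⟨j.castSucc, Fin.castSucc_ne_last j, .inr rfl⟩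
  | cast i =>
    cases j using Fin.lastCases with
    | last => exact .inr ⟨i.castSucc, Fin.castSucc_ne_last i, .inl rfl⟩
    | cast j =>
      have hij' : i ≠ j := fun he => hij (by rw [he])
      exact .inl ⟨PresentedGroup.of ⟨(i, j), hij'⟩, inclusion_of _ _⟩

theorem range_inclusion_sup_normalClosure_VstarSet (n : ℕ) :
    (inclusion n.le_succ).range ⊔ Subgroup.normalClosure (VstarSet (n + 1) n.succ_pos) = ⊤ := by
  rw [eq_top_iff, ← PresentedGroup.closure_range_of, Subgroup.closure_le]
  rintro _ ⟨g, rfl⟩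
  rcases of_mem_range_inclusion_or_mem_VstarSet g with hg | hg
  · exact Subgroup.mem_sup_left hg
  · exact Subgroup.mem_sup_right (Subgroup.subset_normalClosure hg)

theorem exists_inclusion_mul_eq {n : ℕ} (b : VP (n + 1)) :
    ∃ c : VP n, ∃ v ∈ Subgroup.normalClosure (VstarSet (n + 1) n.succ_pos),
      inclusion n.le_succ c * v = b := by
  have hb : b ∈ (inclusion n.le_succ).range ⊔ _ :=
    (range_inclusion_sup_normalClosure_VstarSet n).symm ▸ Subgroup.mem_top b
  obtain ⟨_, ⟨c, rfl⟩, v, hv, hcv⟩ := Subgroup.mem_sup_of_normal_right.mp hb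
  exact ⟨c, v, hv, hcv⟩

theorem exists_prod_W (m : ℕ) (b : VP (m + 2)) :
    ∃ w : Fin (m + 1) → VP (m + 2),
      (∀ k : Fin (m + 1), w k ∈ W (m + 2) (k + 2) (by omega) (by omega)) ∧
        b = (List.ofFn w).prod := by
  induction m with
  | zero =>
    refine ⟨fun _ => b, fun k => ?_, by simp⟩
    rw [Fin.fin_one_eq_zero k]
    show b ∈ W 2 2 two_pos le_rfl
    rw [W_self, normalClosure_VstarSet_two]
    trivial
  | succ m ih =>
    obtain ⟨c, v, hv, rfl⟩ := exists_inclusion_mul_eq b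
    obtain ⟨w, hw, rfl⟩ := ih c
    refine ⟨Fin.snoc (fun k => inclusion (m + 2).le_succ (w k)) v, fun k => ?_, ?_⟩
    · induction k using Fin.lastCases with
      | last => simpa only [Fin.snoc_last, Fin.val_last, W_self] using hv
      | cast k =>
        rw [Fin.snoc_castSucc]
        have hk := Subgroup.mem_map_of_mem (inclusion (m + 2).le_succ) (hw k)
        rw [map_inclusion_W] at hk
        exact hk
    · rw [eq_comm, List.ofFn_succ', List.prod_concat, Fin.snoc_last, map_list_prod, List.map_ofFn]
      simp only [Fin.snoc_castSucc]
      rfl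

end VP

/-- The factor `w_j` is `w ⟨j - 2, _⟩`, and `ι ⟨j - 2, _⟩` is `ι_{j,n}`. -/
theorem stmt_5 (n : ℕ) (hn : 2 ≤ n) (b : VP n) :
    ∃ ι : (k : Fin (n - 1)) → VP ((k : ℕ) + 2) →* VP n,
      (∀ (k : Fin (n - 1)) (a c : Fin ((k : ℕ) + 2)) (hac : a ≠ c)
        (hac' : Fin.castLE (by have := k.isLt; omega : (k : ℕ) + 2 ≤ n) a ≠
          Fin.castLE (by have := k.isLt; omega) c),
        ι k (lam hac) = lam hac') ∧
      ∃ w : Fin (n - 1) → VP n,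
        (∀ k : Fin (n - 1), w k ∈ (Subgroup.normalClosure (VstarSet ((k : ℕ) + 2) (by omega))).map (ι k)) ∧
        b = (List.ofFn w).prod := by
  obtain ⟨m, rfl⟩ : ∃ m, n = m + 2 := ⟨n - 2, by omega⟩
  refine ⟨fun k => VP.inclusion (by omega), fun k a c hac hac' => VP.inclusion_lam _ hac hac', ?_⟩
  exact VP.exists_prod_W m b
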